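/- arXiv:2005.09095 — 7 statements merged into one kernel-verified Lean document; each statement's English description precedes it below -/
import Mathlib

section
/- Let Y₀, Y₁ be real random variables with selection indicator D satisfying the cost-adjusted selection rule with non-negative cost function c (so that on {D=1}, Y₁ − c(Y₁) ≥ Y₀, and on {D=0}, Y₀ ≥ Y₁ − c(Y₁)), and let Y := D·Y₁ + (1−D)·Y₀. Then for every y ∈ ℝ: P(Y ≤ y) ≤ P(Y − D·c(Y) ≤ y) ≤ P(Y ≤ y, D=0) + P(D=1)·1{y ≥ b}, where b is a lower bound for the support of Y₀ and Y₁ − c(Y₁). -/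
open MeasureTheory

/-- Worst-case bounds on the distribution of the cost-adjusted outcome. -/
theorem worst_case_bounds
    {Ω : Type*} [MeasurableSpace Ω] (μ : Measure Ω) [IsProbabilityMeasure μ]
    (Y₀ Y₁ D : Ω → ℝ) (c : ℝ → ℝ) (b : ℝ)
    (hc : ∀ y, 0 ≤ c y)
    (hD01 : ∀ᵐ ω ∂μ, D ω = 0 ∨ D ω = 1)
    (hsel1 : ∀ᵐ ω ∂μ, D ω = 1 → Y₀ ω ≤ Y₁ ω - c (Y₁ ω))
    (hsel0 : ∀ᵐ ω ∂μ, D ω = 0 → Y₁ ω - c (Y₁ ω) ≤ Y₀ ω)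
    (hb0 : ∀ᵐ ω ∂μ, b ≤ Y₀ ω)
    (hb1 : ∀ᵐ ω ∂μ, b ≤ Y₁ ω - c (Y₁ ω))
    (Y : Ω → ℝ) (hY : ∀ ω, Y ω = D ω * Y₁ ω + (1 - D ω) * Y₀ ω) :
    ∀ y : ℝ,
      μ {ω | Y ω ≤ y} ≤ μ {ω | Y ω - D ω * c (Y ω) ≤ y} ∧
      μ {ω | Y ω - D ω * c (Y ω) ≤ y} ≤
        μ {ω | Y ω ≤ y ∧ D ω = 0} + μ {ω | D ω = 1} * (if b ≤ y then 1 else 0) := by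
  intro y
  constructor
  · apply measure_mono_ae
    filter_upwards [hD01] with ω hD hYy
    have hYy' : Y ω ≤ y := hYy
    show Y ω - D ω * c (Y ω) ≤ y
    rcases hD with h0 | h1
    · rw [h0]; linarith
    · have := hc (Y ω); rw [h1]; linarith
  · by_cases hby : b ≤ y
    · simp only [hby, if_pos, mul_one]
      calc μ {ω | Y ω - D ω * c (Y ω) ≤ y}
          ≤ μ ({ω | Y ω ≤ y ∧ D ω = 0} ∪ {ω | D ω = 1}) := by
            apply measure_mono_ae
            filter_upwards [hD01] with ω hD h
            have h' : Y ω - D ω * c (Y ω) ≤ y := h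
            rcases hD with h0 | h1
            · left
              rw [h0] at h'
              exact ⟨by linarith, h0⟩
            · right; exact h1
        _ ≤ _ := measure_union_le _ _
    · simp only [hby, if_neg, mul_zero, add_zero, not_false_eq_true]
      apply measure_mono_ae
      filter_upwards [hD01, hb1] with ω hD hb1ω h
      have h' : Y ω - D ω * c (Y ω) ≤ y := h
      rcases hD with h0 | h1
      · rw [h0] at h'
        exact ⟨by linarith, h0⟩
      · exfalso
        rw [h1, one_mul] at h'
        have hYeq : Y ω = Y₁ ω := by rw [hY, h1]; ring
        rw [hYeq] at h'
        exact hby (le_trans hb1ω (by linarith))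
end

section
/- Let K be a nonempty collection of cumulative distribution functions on ℝ, all of which are bounded above pointwise by the CDF F̄(y) = 1{y ≥ b} for some real b. Define S(K)(y) := sup{F(y) : F ∈ K} and F_K(y) := lim_{ỹ ↓ y} S(K)(ỹ). Then F_K is itself a cumulative distribution function: it is non-decreasing, right-continuous, tends to 0 at −∞ and to 1 at +∞. -/
open Filter Topology

/-- A cumulative distribution function on ℝ. -/
def IsCDF (F : ℝ → ℝ) : Prop :=
  Monotone F ∧ (∀ y, ContinuousWithinAt F (Set.Ici y) y) ∧
  Tendsto F atBot (𝓝 0) ∧ Tendsto F atTop (𝓝 1) ∧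
  ∀ y, F y ∈ Set.Icc (0 : ℝ) 1

/-!
The pointwise supremum `S` of the family is monotone, so `sInf (S '' Ioi y)` is its right limit,
which is monotone and right-continuous. It is squeezed between any member `F₀` of the family and
the point-mass CDF `1{y ≥ b}`, two CDFs, which forces the limits at `±∞` and the range `[0, 1]`.
-/

open Set Function

lemma monotone_csSup_image_eval {α β : Type*} [Preorder α] [ConditionallyCompleteLattice β]
    {K : Set (α → β)} (hne : K.Nonempty) (hmono : ∀ F ∈ K, Monotone F)
    (hbdd : ∀ t, BddAbove ((fun F => F t) '' K)) :
    Monotone fun t => sSup ((fun F => F t) '' K) := fun _ t' htt' =>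
  csSup_le (hne.image _) <| forall_mem_image.2 fun F hF =>
    (hmono F hF htt').trans (le_csSup (hbdd t') (mem_image_of_mem _ hF))

lemma Monotone.rightLim_le_of_le {α β : Type*} [LinearOrder α] [TopologicalSpace α]
    [OrderTopology α] [ConditionallyCompleteLinearOrder β] [TopologicalSpace β]
    [OrderTopology β] {f g : α → β} (hf : Monotone f) (hfg : f ≤ g) {x : α}
    [(𝓝[>] x).NeBot] (hg : ContinuousWithinAt g (Ioi x) x) :
    rightLim f x ≤ g x :=
  _root_.ge_of_tendsto hg <| eventually_nhdsWithin_of_forall fun _ ht =>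
    (hf.rightLim_le ht).trans (hfg _)

lemma isCDF_ite_le (b : ℝ) : IsCDF fun y => if b ≤ y then 1 else 0 := by
  refine ⟨fun x y hxy => ?_, fun y => ?_, ?_, ?_, fun y => ?_⟩
  · dsimp only
    split_ifs with hx hy <;> first | exact absurd (hx.trans hxy) hy | norm_num
  · rcases le_or_gt b y with hy | hy
    · exact continuousWithinAt_const.congr (fun z hz => if_pos (hy.trans hz)) (if_pos hy)
    · refine continuousWithinAt_const.congr_of_eventuallyEq ?_ (if_neg hy.not_ge)
      filter_upwards [Ico_mem_nhdsGE hy] with z hz using if_neg hz.2.not_ge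
  · refine tendsto_const_nhds.congr' ?_
    filter_upwards [eventually_lt_atBot b] with y hy using (if_neg hy.not_ge).symm
  · refine tendsto_const_nhds.congr' ?_
    filter_upwards [eventually_ge_atTop b] with y hy using (if_pos hy).symm
  · dsimp only
    split_ifs <;> norm_num

lemma StieltjesFunction.isCDF_of_le_of_le (G : StieltjesFunction ℝ) {F H : ℝ → ℝ}
    (hF : IsCDF F) (hH : IsCDF H) (hFG : F ≤ G) (hGH : ⇑G ≤ H) : IsCDF G :=
  ⟨G.mono, G.right_continuous,
    tendsto_of_tendsto_of_tendsto_of_le_of_le hF.2.2.1 hH.2.2.1 hFG hGH,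
    tendsto_of_tendsto_of_tendsto_of_le_of_le hF.2.2.2.1 hH.2.2.2.1 hFG hGH,
    fun y => ⟨(hF.2.2.2.2 y).1.trans (hFG y), (hGH y).trans (hH.2.2.2.2 y).2⟩⟩

/-- The right-continuous regularization of the pointwise supremum of a
nonempty family of CDFs, all bounded above by the CDF of the point mass at `b`,
is itself a CDF. (Monotone Envelope Lemma, part 1.) -/
theorem monotone_envelope_is_cdf
    (K : Set (ℝ → ℝ)) (hne : K.Nonempty) (b : ℝ)
    (hcdf : ∀ F ∈ K, IsCDF F)
    (hbd : ∀ F ∈ K, ∀ y : ℝ, F y ≤ if b ≤ y then 1 else 0) :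
    IsCDF (fun y =>
      sInf ((fun t => sSup ((fun F => F t) '' K)) '' Set.Ioi y)) := by
  obtain ⟨F₀, hF₀⟩ := hne
  set S : ℝ → ℝ := fun t => sSup ((fun F => F t) '' K)
  have hbdd : ∀ t, BddAbove ((fun F => F t) '' K) := fun t =>
    ⟨_, forall_mem_image.2 fun F hF => hbd F hF t⟩
  have hS : Monotone S := monotone_csSup_image_eval ⟨F₀, hF₀⟩ (fun F hF => (hcdf F hF).1) hbdd
  have hF₀S : F₀ ≤ S := fun t => le_csSup (hbdd t) (mem_image_of_mem _ hF₀)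
  have hS_le : S ≤ fun y => if b ≤ y then 1 else 0 := fun t =>
    csSup_le (nonempty_of_mem (mem_image_of_mem _ hF₀)) (forall_mem_image.2 fun F hF => hbd F hF t)
  have hG : (fun y => sInf (S '' Ioi y)) = hS.stieltjesFunction :=
    funext fun y => hS.rightLim_eq_sInf.symm
  rw [hG]
  exact hS.stieltjesFunction.isCDF_of_le_of_le (hcdf F₀ hF₀) (isCDF_ite_le b)
    (fun y => (hF₀S y).trans (hS.le_rightLim le_rfl))
    (fun y => hS.rightLim_le_of_le hS_le
      (((isCDF_ite_le b).2.1 y).mono Ioi_subset_Ici_self))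
end

section
/- Let (F_z)_{z ∈ Z} be a family of CDFs on ℝ indexed by a partially ordered set Z, and for each z define the envelope F̲(y|z) := lim_{ỹ ↓ y} sup{F_{z̃}(ỹ) : z̃ ≥ z}. Then z ↦ F̲(y|z) is non-increasing in z for every y, and if G(·|z) is any family of CDFs satisfying F_z(y) ≤ G(y|z) for all (y,z) and z ↦ G(y|z) non-increasing in z for all y, then F̲(y|z) ≤ G(y|z) for all (y,z). -/
open Filter Topology

/-- The lower monotone envelope `F̲(y|z)` of a family of CDFs indexed by a poset. -/
noncomputable def envCDF {Z : Type*} [PartialOrder Z] (F : Z → ℝ → ℝ) (z : Z) (y : ℝ) : ℝ :=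
  sInf ((fun t => sSup {x : ℝ | ∃ z' : Z, z ≤ z' ∧ F z' t = x}) '' Set.Ioi y)

/-- The envelope `F̲(·|z)` is non-increasing in `z`, and is the smallest
family of CDFs dominating the `F_z` pointwise that is non-increasing in `z`.
(Monotone Envelope Lemma, part 2.) -/
theorem monotone_envelope_minimal
    {Z : Type*} [PartialOrder Z] (F : Z → ℝ → ℝ)
    (hF : ∀ z, IsCDF (F z)) :
    (∀ y : ℝ, ∀ z z' : Z, z ≤ z' → envCDF F z' y ≤ envCDF F z y) ∧
    (∀ G : Z → ℝ → ℝ, (∀ z, IsCDF (G z)) →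
      (∀ z y, F z y ≤ G z y) →
      (∀ y : ℝ, ∀ z z' : Z, z ≤ z' → G z' y ≤ G z y) →
      ∀ z y, envCDF F z y ≤ G z y) := by
  set g : Z → ℝ → ℝ := fun z t => sSup {x : ℝ | ∃ z' : Z, z ≤ z' ∧ F z' t = x} with hg
  have hS_ne : ∀ (z : Z) (t : ℝ), {x : ℝ | ∃ z' : Z, z ≤ z' ∧ F z' t = x}.Nonempty :=
    fun z t => ⟨F z t, z, le_rfl, rfl⟩
  have hS_bdd : ∀ (z : Z) (t : ℝ), BddAbove {x : ℝ | ∃ z' : Z, z ≤ z' ∧ F z' t = x} := by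
    intro z t
    exact ⟨1, fun x ⟨z', _, hx⟩ => hx ▸ ((hF z').2.2.2.2 t).2⟩
  have hg_nonneg : ∀ z t, 0 ≤ g z t := fun z t =>
    le_trans ((hF z).2.2.2.2 t).1 (le_csSup (hS_bdd z t) ⟨z, le_rfl, rfl⟩)
  have himg_ne : ∀ (z : Z) (y : ℝ), ((g z) '' Set.Ioi y).Nonempty :=
    fun z y => ⟨g z (y + 1), y + 1, by simp, rfl⟩
  have himg_bdd : ∀ (z : Z) (y : ℝ), BddBelow ((g z) '' Set.Ioi y) := by
    intro z y
    exact ⟨0, fun b ⟨t, _, hb⟩ => hb ▸ hg_nonneg z t⟩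
  have henv : ∀ (z : Z) (y : ℝ), envCDF F z y = sInf ((g z) '' Set.Ioi y) := fun z y => rfl
  constructor
  · intro y z z' hzz'
    rw [henv, henv]
    refine le_csInf (himg_ne z y) ?_
    rintro b ⟨t, ht, rfl⟩
    have h1 : g z' t ≤ g z t := by
      refine csSup_le_csSup (hS_bdd z t) (hS_ne z' t) ?_
      rintro x ⟨z'', hz'', hx⟩
      exact ⟨z'', le_trans hzz' hz'', hx⟩
    exact le_trans (csInf_le (himg_bdd z' y) ⟨t, ht, rfl⟩) h1
  · intro G hG hFG hGmono z y
    rw [henv]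
    have hkey : ∀ t ∈ Set.Ioi y, sInf ((g z) '' Set.Ioi y) ≤ G z t := by
      intro t ht
      have h1 : g z t ≤ G z t := by
        refine csSup_le (hS_ne z t) ?_
        rintro x ⟨z'', hz'', rfl⟩
        exact le_trans (hFG z'' t) (hGmono t z z'' hz'')
      exact le_trans (csInf_le (himg_bdd z y) ⟨t, ht, rfl⟩) h1
    have htend : Tendsto (G z) (𝓝[>] y) (𝓝 (G z y)) :=
      ((hG z).2.1 y).mono_left (nhdsWithin_mono y Set.Ioi_subset_Ici_self)
    exact ge_of_tendsto htend (eventually_mem_nhdsWithin.mono hkey)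
end

section
/- Let X and X̃ be real random variables on the same probability space with CDFs F and F̃ respectively. Then for every y ∈ ℝ: P(X − X̃ ≤ y) ≤ 1 + inf_{t ∈ ℝ} min{0, F(t) − F̃(t − y)} and P(X − X̃ ≤ y) ≥ sup_{t ∈ ℝ} max{0, F(t) − F̃((t − y)⁻)}, where F̃(s⁻) denotes the left limit. (These are the Makarov/Rüschendorf bounds on the distribution of a difference with given marginals.) -/
open MeasureTheory

/-- Makarov/Rüschendorf bounds on the distribution of the difference
`X − X̃` of two random variables with given marginals and arbitrary copula. -/
theorem makarov_bounds
    {Ω : Type*} [MeasurableSpace Ω] (μ : Measure Ω) [IsProbabilityMeasure μ]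
    (X Xt : Ω → ℝ) (hX : Measurable X) (hXt : Measurable Xt)
    (F Ft : ℝ → ℝ)
    (hF : ∀ t : ℝ, F t = (μ {ω | X ω ≤ t}).toReal)
    (hFt : ∀ t : ℝ, Ft t = (μ {ω | Xt ω ≤ t}).toReal) :
    ∀ y : ℝ,
      (μ {ω | X ω - Xt ω ≤ y}).toReal ≤
        1 + ⨅ t : ℝ, min 0 (F t - Ft (t - y)) ∧
      (⨆ t : ℝ, max 0 (F t - sSup (Ft '' Set.Iio (t - y)))) ≤
        (μ {ω | X ω - Xt ω ≤ y}).toReal := by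
  intro y
  have hle1 : ∀ s : Set Ω, (μ s).toReal ≤ 1 := by
    intro s
    exact ENNReal.toReal_le_of_le_ofReal zero_le_one (by simpa using prob_le_one)
  have hFt01 : ∀ s : ℝ, Ft s ≤ 1 := fun s => by rw [hFt]; exact hle1 _
  have hFt0 : ∀ s : ℝ, 0 ≤ Ft s := fun s => by rw [hFt]; exact ENNReal.toReal_nonneg
  constructor
  · -- upper bound
    have h1 : (μ {ω | X ω - Xt ω ≤ y}).toReal - 1 ≤ ⨅ t : ℝ, min 0 (F t - Ft (t - y)) := by
      apply le_ciInf
      intro t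
      rw [le_min_iff]
      refine ⟨by linarith [hle1 {ω | X ω - Xt ω ≤ y}], ?_⟩
      have hsub : {ω | X ω - Xt ω ≤ y} ⊆ {ω | X ω ≤ t} ∪ {ω | Xt ω ≤ t - y}ᶜ := by
        intro ω hω
        simp only [Set.mem_setOf_eq] at hω
        by_cases h : X ω ≤ t
        · exact Or.inl h
        · exact Or.inr (by simp only [Set.mem_compl_iff, Set.mem_setOf_eq]; push_neg at h ⊢; linarith)
      have hm : MeasurableSet {ω | Xt ω ≤ t - y} := hXt measurableSet_Iic
      have hcompl : (μ ({ω | Xt ω ≤ t - y}ᶜ)).toReal = 1 - Ft (t - y) := by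
        rw [prob_compl_eq_one_sub hm, hFt,
          ENNReal.toReal_sub_of_le prob_le_one ENNReal.one_ne_top]
        simp
      have h2 : (μ {ω | X ω - Xt ω ≤ y}).toReal ≤
          (μ {ω | X ω ≤ t}).toReal + (μ ({ω | Xt ω ≤ t - y}ᶜ)).toReal := by
        rw [← ENNReal.toReal_add (measure_ne_top μ _) (measure_ne_top μ _)]
        exact ENNReal.toReal_mono (by finiteness)
          ((measure_mono hsub).trans (measure_union_le _ _))
      rw [hF]
      rw [hcompl] at h2
      linarith
    linarith
  · -- lower bound
    apply ciSup_le
    intro t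
    apply max_le ENNReal.toReal_nonneg
    set c := t - y with hc
    have hbdd : BddAbove (Ft '' Set.Iio c) := ⟨1, by rintro _ ⟨s, _, rfl⟩; exact hFt01 s⟩
    have hmem : Ft (c - 1) ∈ Ft '' Set.Iio c := ⟨c - 1, by simp, rfl⟩
    have hSnn : 0 ≤ sSup (Ft '' Set.Iio c) := le_csSup_of_le hbdd hmem (hFt0 _)
    have key : (μ {ω | Xt ω < c}).toReal ≤ sSup (Ft '' Set.Iio c) := by
      have hU : {ω | Xt ω < c} = ⋃ n : ℕ, {ω | Xt ω ≤ c - 1 / (n + 1)} := by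
        ext ω
        simp only [Set.mem_setOf_eq, Set.mem_iUnion]
        constructor
        · intro h
          obtain ⟨n, hn⟩ := exists_nat_one_div_lt (sub_pos.mpr h)
          exact ⟨n, by push_cast at hn ⊢; linarith⟩
        · rintro ⟨n, hn⟩
          have hpos : (0:ℝ) < 1 / (n + 1) := by positivity
          linarith
      rw [hU]
      have hmono : Monotone (fun n : ℕ => {ω | Xt ω ≤ c - 1 / (n + 1)}) := by
        intro m n hmn ω hω
        simp only [Set.mem_setOf_eq] at hω ⊢
        have hmn' : (m:ℝ) ≤ n := Nat.cast_le.mpr hmn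
        have h1 : (1:ℝ) / (n + 1) ≤ 1 / (m + 1) :=
          one_div_le_one_div_of_le (by positivity) (by linarith)
        linarith
      rw [hmono.directed_le.measure_iUnion]
      apply ENNReal.toReal_le_of_le_ofReal hSnn
      apply iSup_le
      intro n
      have heq : μ {ω | Xt ω ≤ c - 1 / (n + 1)} = ENNReal.ofReal (Ft (c - 1 / (n + 1))) := by
        rw [hFt, ENNReal.ofReal_toReal (measure_ne_top μ _)]
      rw [heq]
      apply ENNReal.ofReal_le_ofReal
      apply le_csSup hbdd
      refine ⟨c - 1 / (n + 1), ?_, rfl⟩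
      simp only [Set.mem_Iio]
      have hpos : (0:ℝ) < 1 / (n + 1) := by positivity
      linarith
    have hsub : {ω | X ω ≤ t} \ {ω | Xt ω < c} ⊆ {ω | X ω - Xt ω ≤ y} := by
      rintro ω ⟨h1, h2⟩
      simp only [Set.mem_setOf_eq] at h1 h2 ⊢
      push_neg at h2
      rw [hc] at h2
      linarith
    have hdiff : (μ {ω | X ω ≤ t}).toReal ≤
        (μ ({ω | X ω ≤ t} \ {ω | Xt ω < c})).toReal + (μ {ω | Xt ω < c}).toReal := by
      rw [← ENNReal.toReal_add (measure_ne_top μ _) (measure_ne_top μ _)]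
      refine ENNReal.toReal_mono (by finiteness) ?_
      exact (measure_mono (fun ω hω => by
        by_cases h : ω ∈ {ω | Xt ω < c}
        · exact Set.mem_union_right _ h
        · exact Set.mem_union_left _ ⟨hω, h⟩)).trans (measure_union_le _ _)
    have hfin : (μ ({ω | X ω ≤ t} \ {ω | Xt ω < c})).toReal ≤
        (μ {ω | X ω - Xt ω ≤ y}).toReal :=
      ENNReal.toReal_mono (measure_ne_top μ _) (measure_mono hsub)
    rw [hF]
    linarith
end

section
/- Let u₀, u₁ : ℝ → ℝ be continuous, strictly increasing, and surjective (range ℝ), and suppose u₀(y) ≥ u₁(y) for all y. Define C(y) := y − u₀⁻¹(u₁(y)). Then: (a) y ↦ y − C(y) = u₀⁻¹(u₁(y)) is continuous and strictly increasing; (b) C(y) ≥ 0 for all y; and (c) for any real numbers y₀, y₁: u₁(y₁) > u₀(y₀) if and only if y₁ − C(y₁) > y₀. -/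
/-- Utility-model foundation of the cost-adjusted Roy selection rule.
With `C(y) = y − u₀⁻¹(u₁(y))`: (a) `y ↦ y − C y` is continuous and strictly
increasing; (b) `C ≥ 0`; (c) `u₁(y₁) > u₀(y₀)` iff `y₁ − C(y₁) > y₀`. -/
theorem utility_model_foundation
    (u₀ u₁ : ℝ → ℝ)
    (h₀c : Continuous u₀) (h₁c : Continuous u₁)
    (h₀m : StrictMono u₀) (h₁m : StrictMono u₁)
    (h₀s : Function.Surjective u₀) (h₁s : Function.Surjective u₁)
    (hdom : ∀ y, u₁ y ≤ u₀ y)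
    (C : ℝ → ℝ) (hC : ∀ y, C y = y - Function.invFun u₀ (u₁ y)) :
    (Continuous (fun y => y - C y) ∧ StrictMono (fun y => y - C y)) ∧
    (∀ y, 0 ≤ C y) ∧
    (∀ y₀ y₁ : ℝ, u₀ y₀ < u₁ y₁ ↔ y₀ < y₁ - C y₁) := by
  set e := h₀m.orderIsoOfSurjective u₀ h₀s with he
  have hcoe : ∀ x, e x = u₀ x := fun x => rfl
  have hinv : ∀ x, Function.invFun u₀ x = e.symm x := by
    intro x
    apply h₀m.injective
    rw [Function.invFun_eq (h₀s x), ← hcoe, e.apply_symm_apply]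
  have hfun : (fun y => y - C y) = fun y => e.symm (u₁ y) := by
    funext y; rw [hC y, hinv]; ring
  have hrw : ∀ y, y - C y = e.symm (u₁ y) := fun y => congrFun hfun y
  have hu : ∀ y, u₀ (y - C y) = u₁ y := by
    intro y; rw [hrw, ← hcoe, e.apply_symm_apply]
  refine ⟨⟨?_, ?_⟩, ?_, ?_⟩
  · rw [hfun]; exact (OrderIso.continuous e.symm).comp h₁c
  · rw [hfun]; exact e.symm.strictMono.comp h₁m
  · intro y
    have : y - C y ≤ y := by
      rw [← h₀m.le_iff_le, hu]; exact hdom y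
    linarith
  · intro y₀ y₁
    rw [← hu y₁, h₀m.lt_iff_lt]
end

section
/- Let Z be a finite partially ordered set, and for each z ∈ Z let m(z) := E[Y | Z = z] and p(z) := P(D = 1 | Z = z) > 0 be given, for a random vector (Y, D, Z) with Y integrable and D ∈ {0,1}. Define C̲(z) := p(z)⁻¹ (m(z) − inf{m(z̃) : z̃ ≥ z}). Then: (a) C̲(z) ≥ 0 for all z; (b) the map z ↦ m(z) − p(z)·C̲(z) = inf{m(z̃) : z̃ ≥ z} is non-decreasing on Z; and (c) for any non-negative function c : Z → ℝ such that z ↦ m(z) − p(z)·c(z) is non-decreasing, c(z) ≥ C̲(z) for all z. -/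
/-- The minimal z-only cost function under imperfect foresight.
With `m z = E[Y|Z=z]`, `p z = P(D=1|Z=z) > 0`, and
`C̲ z = p(z)⁻¹ (m z − inf {m z̃ : z̃ ≥ z})`: (a) `C̲ ≥ 0`; (b) `z ↦ m z − p z · C̲ z`
equals the lower monotone envelope and is non-decreasing; (c) `C̲` is minimal among
non-negative `c` making `z ↦ m z − p z · c z` non-decreasing. -/
theorem minimal_cost_function
    {Z : Type*} [Fintype Z] [PartialOrder Z]
    (m p : Z → ℝ) (hp : ∀ z, 0 < p z)
    (Cmin : Z → ℝ)
    (hCmin : ∀ z, Cmin z = (p z)⁻¹ * (m z - sInf {x : ℝ | ∃ z' : Z, z ≤ z' ∧ m z' = x})) :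
    (∀ z, 0 ≤ Cmin z) ∧
    ((∀ z, m z - p z * Cmin z = sInf {x : ℝ | ∃ z' : Z, z ≤ z' ∧ m z' = x}) ∧
      Monotone (fun z => m z - p z * Cmin z)) ∧
    (∀ c : Z → ℝ, (∀ z, 0 ≤ c z) → Monotone (fun z => m z - p z * c z) →
      ∀ z, Cmin z ≤ c z) := by
  set S : Z → Set ℝ := fun z => {x : ℝ | ∃ z' : Z, z ≤ z' ∧ m z' = x} with hS
  have hfin : ∀ z, (S z).Finite := by
    intro z
    have : S z ⊆ Set.range m := by rintro x ⟨z', _, rfl⟩; exact ⟨z', rfl⟩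
    exact (Set.finite_range m).subset this
  have hne : ∀ z, (S z).Nonempty := fun z => ⟨m z, z, le_refl z, rfl⟩
  have hbdd : ∀ z, BddBelow (S z) := fun z => (hfin z).bddBelow
  have henv_le : ∀ z, sInf (S z) ≤ m z := fun z => csInf_le (hbdd z) ⟨z, le_refl z, rfl⟩
  have henv_mono : ∀ z₁ z₂, z₁ ≤ z₂ → sInf (S z₁) ≤ sInf (S z₂) := by
    intro z₁ z₂ h
    exact csInf_le_csInf (hbdd z₁) (hne z₂) (by rintro x ⟨z', hz', rfl⟩; exact ⟨z', h.trans hz', rfl⟩)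
  have heq : ∀ z, m z - p z * Cmin z = sInf (S z) := by
    intro z
    rw [hCmin z, ← mul_assoc, mul_inv_cancel₀ (hp z).ne', one_mul]
    ring
  refine ⟨?_, ⟨heq, ?_⟩, ?_⟩
  · intro z
    rw [hCmin z]
    exact mul_nonneg (inv_nonneg.2 (hp z).le) (sub_nonneg.2 (henv_le z))
  · intro z₁ z₂ h
    simp only [heq z₁, heq z₂]
    exact henv_mono z₁ z₂ h
  · intro c hc hmono z
    have hlb : m z - p z * c z ≤ sInf (S z) := by
      apply le_csInf (hne z)
      rintro x ⟨z', hz', rfl⟩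
      calc m z - p z * c z ≤ m z' - p z' * c z' := hmono hz'
        _ ≤ m z' := by nlinarith [mul_nonneg (hp z').le (hc z')]
    rw [hCmin z]
    change (p z)⁻¹ * (m z - sInf (S z)) ≤ c z
    calc (p z)⁻¹ * (m z - sInf (S z)) ≤ (p z)⁻¹ * (p z * c z) := by
          apply mul_le_mul_of_nonneg_left _ (inv_nonneg.2 (hp z).le)
          linarith
      _ = c z := by rw [← mul_assoc, inv_mul_cancel₀ (hp z).ne', one_mul]
end

section
/- Let Y be a real random variable, D ∈ {0,1}, and c : ℝ → ℝ non-negative with y ↦ y − c(y) strictly increasing and bijective. Define Y₀ := Y − D·c(Y) and Y₁ := g⁻¹(Y − D·c(Y)) where g(y) := y − c(y). Then: (a) D·Y₁ + (1−D)·Y₀ = Y almost surely; (b) Y₁ − c(Y₁) = Y₀ almost surely (so the selection rule 'Y₁ − c(Y₁) > Y₀ ⇒ D=1 and Y₁ − c(Y₁) < Y₀ ⇒ D=0' holds vacuously); and (c) the pair (Y₀, Y₁ − c(Y₁)) equals (Y − D·c(Y), Y − D·c(Y)). -/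
/-- The constructive step in the converse direction of Theorem 1:
from observed `(Y, D)` and a candidate cost `c`, one builds potential outcomes
`Y₀ := Y − D·c(Y)` and `Y₁ := g⁻¹(Y₀)` with `g(y) = y − c(y)` that are consistent
with the extended Roy model. -/
theorem constructive_potential_outcomes
    {Ω : Type*} (Y D : Ω → ℝ) (c : ℝ → ℝ)
    (hc : ∀ y, 0 ≤ c y)
    (hg : StrictMono (fun y => y - c y))
    (hgbij : Function.Bijective (fun y => y - c y))
    (hD01 : ∀ ω, D ω = 0 ∨ D ω = 1)
    (Y₀ Y₁ : Ω → ℝ)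
    (hY₀ : ∀ ω, Y₀ ω = Y ω - D ω * c (Y ω))
    (hY₁ : ∀ ω, Y₁ ω = Function.invFun (fun y => y - c y) (Y₀ ω)) :
    (∀ ω, D ω * Y₁ ω + (1 - D ω) * Y₀ ω = Y ω) ∧
    (∀ ω, Y₁ ω - c (Y₁ ω) = Y₀ ω) ∧
    (∀ ω, (Y₀ ω, Y₁ ω - c (Y₁ ω)) = (Y ω - D ω * c (Y ω), Y ω - D ω * c (Y ω))) := by
  have hginv : ∀ x, (fun y => y - c y) (Function.invFun (fun y => y - c y) x) = x :=
    fun x => Function.rightInverse_invFun hgbij.2 x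
  have h2 : ∀ ω, Y₁ ω - c (Y₁ ω) = Y₀ ω := by
    intro ω; rw [hY₁]; exact hginv (Y₀ ω)
  refine ⟨?_, h2, ?_⟩
  · intro ω
    rcases hD01 ω with h | h
    · simp [h, hY₀ ω]
    · have : Y₁ ω = Y ω := by
        rw [hY₁, hY₀, h, one_mul]
        exact Function.leftInverse_invFun hgbij.1 (Y ω)
      simp [h, this]
  · intro ω
    rw [h2 ω, hY₀ ω]
end
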